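/- Let X and Y be Polish, μ ∈ P(X), ν ∈ P(Y), and c : X × Y → [0,∞) continuous such that T_c(μ,ν) < ∞. For any optimal transport plan π and any two Kantorovich potentials f₁, f₂ ∈ S_c(μ,ν): (1) f₁ = f₂ μ-almost surely if and only if f₁ = f₂ everywhere on pr_X(supp π); (2) f₁^c = f₂^c ν-almost surely if and only if f₁^c = f₂^c everywhere on pr_Y(supp π); (3) f₁ = f₂ on pr_X(supp π) if and only if f₁^c = f₂^c on pr_Y(supp π). -/

import Mathlib

open MeasureTheory Filter Set Topology
open scoped ENNReal NNReal Manifold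

noncomputable section

/-- The topological support of a Borel measure: points all of whose open
neighborhoods have positive measure. -/
def msupport {X : Type*} [TopologicalSpace X] [MeasurableSpace X]
    (μ : Measure X) : Set X :=
  {x | ∀ U : Set X, IsOpen U → x ∈ U → 0 < μ U}

/-- `π` is a coupling (transport plan) between `μ` and `ν`. -/
def IsCoupling {X Y : Type*} [MeasurableSpace X] [MeasurableSpace Y]
    (π : Measure (X × Y)) (μ : Measure X) (ν : Measure Y) : Prop :=
  π.map Prod.fst = μ ∧ π.map Prod.snd = ν

/-- The optimal transport cost `T_c(μ, ν)`. -/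
def transportCost {X Y : Type*} [MeasurableSpace X] [MeasurableSpace Y]
    (c : X → Y → ℝ) (μ : Measure X) (ν : Measure Y) : ℝ≥0∞ :=
  ⨅ (π : Measure (X × Y)) (_ : IsCoupling π μ ν),
    ∫⁻ p, ENNReal.ofReal (c p.1 p.2) ∂π

/-- `π` is an optimal transport plan between `μ` and `ν` for the cost `c`. -/
def IsOptimalPlan {X Y : Type*} [MeasurableSpace X] [MeasurableSpace Y]
    (c : X → Y → ℝ) (μ : Measure X) (ν : Measure Y) (π : Measure (X × Y)) : Prop :=
  IsCoupling π μ ν ∧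
    ∫⁻ p, ENNReal.ofReal (c p.1 p.2) ∂π = transportCost c μ ν

/-- The `c`-transform of a function `f : X → ℝ ∪ {-∞}`, namely
`f^c(y) = inf_x (c(x,y) - f(x))`. -/
def cTransform {X Y : Type*} (c : X → Y → ℝ) (f : X → EReal) : Y → EReal :=
  fun y => ⨅ x, ((c x y : ℝ) : EReal) - f x

/-- The `c`-transform of a function `g : Y → ℝ ∪ {-∞}`, namely
`g^c(x) = inf_y (c(x,y) - g(y))`. -/
def cTransformY {X Y : Type*} (c : X → Y → ℝ) (g : Y → EReal) : X → EReal :=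
  fun x => ⨅ y, ((c x y : ℝ) : EReal) - g y

/-- `f : X → ℝ ∪ {-∞}` is `c`-concave on `X`: it is the `c`-transform of some
`g : Y → ℝ ∪ {-∞}` and is not identically `-∞`. -/
def CConcave {X Y : Type*} (c : X → Y → ℝ) (f : X → EReal) : Prop :=
  (∃ g : Y → EReal, (∀ y, g y ≠ ⊤) ∧ f = cTransformY c g) ∧
    (∀ x, f x ≠ ⊤) ∧ (∃ x, f x ≠ ⊥)

/-- The `c`-subdifferential `∂_c f = {(x,y) | f(x) + f^c(y) = c(x,y)}`. -/
def cSubdiff {X Y : Type*} (c : X → Y → ℝ) (f : X → EReal) : Set (X × Y) :=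
  {p | f p.1 + cTransform c f p.2 = ((c p.1 p.2 : ℝ) : EReal)}

/-- `f` is a (generalized) Kantorovich potential for `(c, μ, ν)`: it is
`c`-concave and satisfies `f ⊕ f^c = c` almost surely with respect to every
optimal transport plan (which, for `T_c(μ,ν) < ∞`, is equivalent to
`∫ (f ⊕ f^c) dπ = T_c(μ,ν)` for every optimal `π`, since `f ⊕ f^c ≤ c`). -/
def IsKantorovichPotential {X Y : Type*} [MeasurableSpace X] [MeasurableSpace Y]
    (c : X → Y → ℝ) (μ : Measure X) (ν : Measure Y) (f : X → EReal) : Prop :=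
  CConcave c f ∧
    ∀ π : Measure (X × Y), IsOptimalPlan c μ ν π →
      ∀ᵐ p ∂π, f p.1 + cTransform c f p.2 = ((c p.1 p.2 : ℝ) : EReal)

/-- The plan `π` induces regularity on `U` with respect to the compact set `K`. -/
def InducesRegularityOn {X Y : Type*} [TopologicalSpace X] [TopologicalSpace Y]
    [MeasurableSpace X] [MeasurableSpace Y]
    (π : Measure (X × Y)) (U : Set X) (K : Set Y) : Prop :=
  IsCompact K ∧
    (Prod.fst '' msupport π) ∩ U = Prod.fst '' (msupport π ∩ (U ×ˢ K))

/-- The plan `π` induces regularity at the point `x ∈ supp μ`: it induces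
regularity on some relatively open neighborhood `U ⊆ supp μ` of `x`. -/
def InducesRegularityAt {X Y : Type*} [TopologicalSpace X] [TopologicalSpace Y]
    [MeasurableSpace X] [MeasurableSpace Y]
    (π : Measure (X × Y)) (μ : Measure X) (x : X) : Prop :=
  ∃ U : Set X, x ∈ U ∧ (∃ V : Set X, IsOpen V ∧ U = V ∩ msupport μ) ∧
    ∃ K : Set Y, InducesRegularityOn π U K

/-- `F` is a decomposition of the set `S` into its connected components. -/
def IsComponentDecomp {X : Type*} [TopologicalSpace X] {ι : Type*}
    (S : Set X) (F : ι → Set X) : Prop :=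
  (⋃ i, F i) = S ∧ Pairwise (fun i j => Disjoint (F i) (F j)) ∧
    ∀ i, ∃ x ∈ S, F i = connectedComponentIn S x

/-- A transport plan `π` is degenerate (with respect to decompositions `F`, `G`
of the supports of `μ` and `ν` into connected components). -/
def IsDegenerate {X Y : Type*} [MeasurableSpace X] [MeasurableSpace Y] {ι κ : Type*}
    (F : ι → Set X) (G : κ → Set Y) (μ : Measure X) (ν : Measure Y)
    (π : Measure (X × Y)) : Prop :=
  ∃ (I' : Set ι) (J' : Set κ),
    0 < (∑' i : I', μ (F i.1)) ∧
    (∑' i : I', μ (F i.1)) = (∑' i : I', ∑' j : J', π (F i.1 ×ˢ G j.1)) ∧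
    (∑' i : I', ∑' j : J', π (F i.1 ×ˢ G j.1)) = (∑' j : J', ν (G j.1)) ∧
    (∑' j : J', ν (G j.1)) < 1

end

/-!
On the support of an optimal plan `π` every Kantorovich potential satisfies
`f x + f^c y = c x y`: the inequality `≤` always holds, and `≥` holds `π`-a.e. and is a closed
condition because `f` and `f^c` are upper semicontinuous (infima of continuous functions) while
`c` is continuous. On `supp π` the values of `f` and `f^c` therefore determine each other, which
gives (3). If `f₁ = f₂` holds `π`-a.e. in the first coordinate, then `c ≤ f₁ x + f₂^c y` holds
`π`-a.e., hence on `supp π`, where it reads `f₂ x ≤ f₁ x`; by symmetry `f₁ = f₂` on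
`pr_X (supp π)`. Since `supp π` is `π`-conull, this gives (1), and (2) follows from (1)
and (3) applied at `π`-almost every point.
-/

lemma msupport_eq_support {Z : Type*} [TopologicalSpace Z] [MeasurableSpace Z]
    (μ : Measure Z) : msupport μ = μ.support := by
  simp only [msupport, Measure.support_eq_forall_isOpen]
  ext
  exact forall_congr' fun _ => forall_comm

section Semicontinuity

variable {Z β : Type*} [TopologicalSpace Z] [LinearOrder β] [DenselyOrdered β] {u v : Z → β}

lemma UpperSemicontinuous.isOpen_setOf_lt (hu : UpperSemicontinuous u)
    (hv : LowerSemicontinuous v) : IsOpen {z | u z < v z} := by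
  refine isOpen_iff_mem_nhds.mpr fun z hz => ?_
  obtain ⟨b, hub, hbv⟩ := exists_between hz
  filter_upwards [hu z b hub, hv z b hbv] with p hpu hpv using hpu.trans hpv

lemma MeasureTheory.Measure.le_of_ae_le_of_mem_support [MeasurableSpace Z] {π : Measure Z}
    (hu : UpperSemicontinuous u) (hv : LowerSemicontinuous v) (h : ∀ᵐ z ∂π, v z ≤ u z)
    {z : Z} (hz : z ∈ π.support) : v z ≤ u z := by
  by_contra! hlt
  have hnull : π {z | u z < v z} = 0 := by simpa only [not_le] using ae_iff.mp h
  exact Measure.subset_compl_support_of_isOpen (hu.isOpen_setOf_lt hv) hnull hlt hz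

end Semicontinuity

lemma EReal.continuous_coe_sub_const {Z : Type*} [TopologicalSpace Z] {r : Z → ℝ}
    (hr : Continuous r) (a : EReal) : Continuous fun z => (r z : EReal) - a := by
  induction a with
  | bot => simpa only [EReal.coe_sub_bot] using continuous_const
  | coe a =>
    simp only [← EReal.coe_sub]
    exact continuous_coe_real_ereal.comp (hr.sub continuous_const)
  | top => simpa only [EReal.sub_top] using continuous_const

section cTransform

variable {X Y : Type*} {c : X → Y → ℝ} {f : X → EReal}

lemma upperSemicontinuous_cTransform [TopologicalSpace Y] (hc : ∀ x, Continuous (c x))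
    (f : X → EReal) : UpperSemicontinuous (cTransform c f) :=
  upperSemicontinuous_iInf fun x =>
    (EReal.continuous_coe_sub_const (hc x) (f x)).upperSemicontinuous

lemma upperSemicontinuous_cTransformY [TopologicalSpace X] (hc : ∀ y, Continuous (c · y))
    (g : Y → EReal) : UpperSemicontinuous (cTransformY c g) :=
  upperSemicontinuous_iInf fun y =>
    (EReal.continuous_coe_sub_const (hc y) (g y)).upperSemicontinuous

lemma CConcave.upperSemicontinuous [TopologicalSpace X] (hc : ∀ y, Continuous (c · y))
    (hf : CConcave c f) : UpperSemicontinuous f := by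
  obtain ⟨⟨g, -, rfl⟩, -⟩ := hf
  exact upperSemicontinuous_cTransformY hc g

lemma cTransform_ne_top (hf : ∃ x, f x ≠ ⊥) (y : Y) : cTransform c f y ≠ ⊤ := by
  obtain ⟨x, hx⟩ := hf
  refine ne_top_of_le_ne_top ?_ (iInf_le _ x)
  generalize f x = a at hx
  induction a with
  | bot => exact absurd rfl hx
  | coe a => exact EReal.coe_ne_top _
  | top => simp

lemma add_cTransform_le (f : X → EReal) (x : X) (y : Y) :
    f x + cTransform c f y ≤ c x y :=
  add_comm (f x) _ ▸ EReal.add_le_of_le_sub (iInf_le _ x)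

lemma CConcave.exists_real_of_mem_cSubdiff (hf : CConcave c f) {p : X × Y}
    (hp : p ∈ cSubdiff c f) :
    ∃ a b : ℝ, f p.1 = a ∧ cTransform c f p.2 = b ∧ a + b = c p.1 p.2 := by
  have ha : f p.1 ≠ ⊥ := fun h => by simp [cSubdiff, h] at hp
  have hb : cTransform c f p.2 ≠ ⊥ := fun h => by simp [cSubdiff, h] at hp
  refine ⟨(f p.1).toReal, (cTransform c f p.2).toReal, (EReal.coe_toReal (hf.2.1 _) ha).symm,
    (EReal.coe_toReal (cTransform_ne_top hf.2.2 _) hb).symm, ?_⟩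
  rw [← EReal.coe_eq_coe_iff, EReal.coe_add, EReal.coe_toReal (hf.2.1 _) ha,
    EReal.coe_toReal (cTransform_ne_top hf.2.2 _) hb]
  exact hp

lemma CConcave.eq_iff_cTransform_eq_of_mem_cSubdiff {f₁ f₂ : X → EReal} (hf₁ : CConcave c f₁)
    (hf₂ : CConcave c f₂) {p : X × Y} (hp₁ : p ∈ cSubdiff c f₁) (hp₂ : p ∈ cSubdiff c f₂) :
    f₁ p.1 = f₂ p.1 ↔ cTransform c f₁ p.2 = cTransform c f₂ p.2 := by
  obtain ⟨a₁, b₁, ha₁, hb₁, hab₁⟩ := hf₁.exists_real_of_mem_cSubdiff hp₁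
  obtain ⟨a₂, b₂, ha₂, hb₂, hab₂⟩ := hf₂.exists_real_of_mem_cSubdiff hp₂
  rw [ha₁, ha₂, hb₁, hb₂, EReal.coe_eq_coe_iff, EReal.coe_eq_coe_iff]
  constructor <;> intro h <;> linarith

end cTransform

section Support

variable {X Y : Type*} [TopologicalSpace X] [TopologicalSpace Y] [MeasurableSpace X]
  [MeasurableSpace Y] {c : X → Y → ℝ} {π : Measure (X × Y)} {f₁ f₂ : X → EReal}

lemma le_add_cTransform_of_mem_support (hc : Continuous fun p : X × Y => c p.1 p.2)
    (hf₁ : CConcave c f₁) (hf₂ : CConcave c f₂)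
    (h : ∀ᵐ p ∂π, (c p.1 p.2 : EReal) ≤ f₁ p.1 + cTransform c f₂ p.2)
    {p : X × Y} (hp : p ∈ π.support) : (c p.1 p.2 : EReal) ≤ f₁ p.1 + cTransform c f₂ p.2 := by
  have hu : UpperSemicontinuous fun p : X × Y => f₁ p.1 + cTransform c f₂ p.2 :=
    ((hf₁.upperSemicontinuous (hc.uncurry_right ·)).comp continuous_fst).add'
      ((upperSemicontinuous_cTransform (hc.uncurry_left ·) f₂).comp continuous_snd)
      fun _ => EReal.continuousAt_add (.inl (hf₁.2.1 _)) (.inr (cTransform_ne_top hf₂.2.2 _))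
  exact Measure.le_of_ae_le_of_mem_support hu
    (continuous_coe_real_ereal.comp hc).lowerSemicontinuous h hp

lemma support_subset_cSubdiff (hc : Continuous fun p : X × Y => c p.1 p.2) {f : X → EReal}
    (hf : CConcave c f) (h : ∀ᵐ p ∂π, p ∈ cSubdiff c f) : π.support ⊆ cSubdiff c f :=
  fun p hp => (add_cTransform_le f p.1 p.2).antisymm
    (le_add_cTransform_of_mem_support hc hf hf (h.mono fun _ hq => hq.ge) hp)

lemma le_of_ae_eq_of_mem_support (hc : Continuous fun p : X × Y => c p.1 p.2)
    (hf₁ : CConcave c f₁) (hf₂ : CConcave c f₂) (h₂ : ∀ᵐ p ∂π, p ∈ cSubdiff c f₂)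
    (h : ∀ᵐ p ∂π, f₁ p.1 = f₂ p.1) {p : X × Y} (hp : p ∈ π.support) : f₂ p.1 ≤ f₁ p.1 := by
  obtain ⟨a, b, ha, hb, hab⟩ :=
    hf₂.exists_real_of_mem_cSubdiff (support_subset_cSubdiff hc hf₂ h₂ hp)
  have hle := le_add_cTransform_of_mem_support hc hf₁ hf₂
    ((h.and h₂).mono fun _ ⟨hq, hq₂⟩ => by rw [hq]; exact (Eq.symm hq₂).le) hp
  rw [hb, ← hab, EReal.coe_add] at hle
  rw [ha]
  exact (EReal.addLECancellable_coe b).add_le_add_iff_right.mp hle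

lemma eq_of_ae_eq_of_mem_support (hc : Continuous fun p : X × Y => c p.1 p.2)
    (hf₁ : CConcave c f₁) (hf₂ : CConcave c f₂) (h₁ : ∀ᵐ p ∂π, p ∈ cSubdiff c f₁)
    (h₂ : ∀ᵐ p ∂π, p ∈ cSubdiff c f₂) (h : ∀ᵐ p ∂π, f₁ p.1 = f₂ p.1)
    {p : X × Y} (hp : p ∈ π.support) : f₁ p.1 = f₂ p.1 :=
  (le_of_ae_eq_of_mem_support hc hf₂ hf₁ h₁ (h.mono fun _ => Eq.symm) hp).antisymm
    (le_of_ae_eq_of_mem_support hc hf₁ hf₂ h₂ h hp)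

end Support

theorem stmt5_general {X Y : Type*}
    [TopologicalSpace X] [PolishSpace X] [MeasurableSpace X] [BorelSpace X]
    [TopologicalSpace Y] [PolishSpace Y] [MeasurableSpace Y] [BorelSpace Y]
    (c : X → Y → ℝ)
    (hccont : Continuous fun p : X × Y => c p.1 p.2)
    (μ : Measure X) (ν : Measure Y)
    (π : Measure (X × Y)) (hπ : IsOptimalPlan c μ ν π)
    (f₁ f₂ : X → EReal)
    (hf₁ : IsKantorovichPotential c μ ν f₁)
    (hf₂ : IsKantorovichPotential c μ ν f₂) :
    ((∀ᵐ x ∂μ, f₁ x = f₂ x) ↔ ∀ x ∈ Prod.fst '' msupport π, f₁ x = f₂ x) ∧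
    ((∀ᵐ y ∂ν, cTransform c f₁ y = cTransform c f₂ y) ↔
      ∀ y ∈ Prod.snd '' msupport π, cTransform c f₁ y = cTransform c f₂ y) ∧
    ((∀ x ∈ Prod.fst '' msupport π, f₁ x = f₂ x) ↔
      ∀ y ∈ Prod.snd '' msupport π, cTransform c f₁ y = cTransform c f₂ y) := by
  have h₁ : ∀ᵐ p ∂π, p ∈ cSubdiff c f₁ := hf₁.2 π hπ
  have h₂ : ∀ᵐ p ∂π, p ∈ cSubdiff c f₂ := hf₂.2 π hπ
  have hμ : (∀ᵐ x ∂μ, f₁ x = f₂ x) ↔ ∀ᵐ p ∂π, f₁ p.1 = f₂ p.1 := by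
    rw [← hπ.1.1]
    exact ae_map_iff measurable_fst.aemeasurable <| measurableSet_eq_fun
      (hf₁.1.upperSemicontinuous (hccont.uncurry_right ·)).measurable
      (hf₂.1.upperSemicontinuous (hccont.uncurry_right ·)).measurable
  have hν : (∀ᵐ y ∂ν, cTransform c f₁ y = cTransform c f₂ y) ↔
      ∀ᵐ p ∂π, cTransform c f₁ p.2 = cTransform c f₂ p.2 := by
    rw [← hπ.1.2]
    exact ae_map_iff measurable_snd.aemeasurable <| measurableSet_eq_fun
      (upperSemicontinuous_cTransform (hccont.uncurry_left ·) f₁).measurable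
      (upperSemicontinuous_cTransform (hccont.uncurry_left ·) f₂).measurable
  have hsupp : (∀ᵐ p ∂π, f₁ p.1 = f₂ p.1) ↔ ∀ p ∈ π.support, f₁ p.1 = f₂ p.1 :=
    ⟨fun h _ => eq_of_ae_eq_of_mem_support hccont hf₁.1 hf₂.1 h₁ h₂ h,
      mem_of_superset Measure.support_mem_ae⟩
  have htransfer {p : X × Y} (hp₁ : p ∈ cSubdiff c f₁) (hp₂ : p ∈ cSubdiff c f₂) :
      f₁ p.1 = f₂ p.1 ↔ cTransform c f₁ p.2 = cTransform c f₂ p.2 :=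
    hf₁.1.eq_iff_cTransform_eq_of_mem_cSubdiff hf₂.1 hp₁ hp₂
  have hae_transfer : (∀ᵐ p ∂π, f₁ p.1 = f₂ p.1) ↔
      ∀ᵐ p ∂π, cTransform c f₁ p.2 = cTransform c f₂ p.2 :=
    eventually_congr ((h₁.and h₂).mono fun _ hp => htransfer hp.1 hp.2)
  have hsupp_transfer : (∀ p ∈ π.support, f₁ p.1 = f₂ p.1) ↔
      ∀ p ∈ π.support, cTransform c f₁ p.2 = cTransform c f₂ p.2 :=
    forall₂_congr fun _ hp => htransfer (support_subset_cSubdiff hccont hf₁.1 h₁ hp)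
      (support_subset_cSubdiff hccont hf₂.1 h₂ hp)
  simp only [msupport_eq_support, Set.forall_mem_image]
  exact ⟨hμ.trans hsupp, hν.trans (hae_transfer.symm.trans (hsupp.trans hsupp_transfer)),
    hsupp_transfer⟩

/-- Equivalent formulations of almost sure uniqueness of
Kantorovich potentials. -/
theorem stmt5 {X Y : Type*}
    [TopologicalSpace X] [PolishSpace X] [MeasurableSpace X] [BorelSpace X]
    [TopologicalSpace Y] [PolishSpace Y] [MeasurableSpace Y] [BorelSpace Y]
    (c : X → Y → ℝ) (hc0 : ∀ x y, 0 ≤ c x y)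
    (hccont : Continuous fun p : X × Y => c p.1 p.2)
    (μ : Measure X) (ν : Measure Y) [IsProbabilityMeasure μ] [IsProbabilityMeasure ν]
    (hT : transportCost c μ ν < ⊤)
    (π : Measure (X × Y)) (hπ : IsOptimalPlan c μ ν π)
    (f₁ f₂ : X → EReal)
    (hf₁ : IsKantorovichPotential c μ ν f₁)
    (hf₂ : IsKantorovichPotential c μ ν f₂) :
    ((∀ᵐ x ∂μ, f₁ x = f₂ x) ↔ ∀ x ∈ Prod.fst '' msupport π, f₁ x = f₂ x) ∧
    ((∀ᵐ y ∂ν, cTransform c f₁ y = cTransform c f₂ y) ↔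
      ∀ y ∈ Prod.snd '' msupport π, cTransform c f₁ y = cTransform c f₂ y) ∧
    ((∀ x ∈ Prod.fst '' msupport π, f₁ x = f₂ x) ↔
      ∀ y ∈ Prod.snd '' msupport π, cTransform c f₁ y = cTransform c f₂ y) :=
  stmt5_general c hccont μ ν π hπ f₁ f₂ hf₁ hf₂
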